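/- Let S be a connected signed graph on a finite vertex set with smallest eigenvalue strictly greater than −2 which is integrally represented, i.e., there is an integer matrix M whose columns v_x (x ∈ V(S)) satisfy ⟨v_x, v_x⟩ = 2 for all x and ⟨v_x, v_y⟩ = A(x,y) for all x ≠ y, where A is the adjacency matrix of S. Then there exists a finite tree T (a connected acyclic simple graph) and a subset U of V(S) with |V(S) \ U| ≤ 1 such that the principal submatrix of A indexed by U is switching equivalent to the adjacency matrix of the line graph of T. -/

import Mathlib

set_option linter.unusedSectionVars false
set_option maxHeartbeats 1600000

open Filter Matrix

/-- The smallest eigenvalue of a (Hermitian) real matrix. -/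
noncomputable def lmin {V : Type*} [Fintype V] [DecidableEq V] (A : Matrix V V ℝ) : ℝ :=
  if h : A.IsHermitian then ⨅ i, h.eigenvalues i else 0

/-- The smallest eigenvalue of a Hermitian complex matrix. -/
noncomputable def lminC {V : Type*} [Fintype V] [DecidableEq V] (A : Matrix V V ℂ) : ℝ :=
  if h : A.IsHermitian then ⨅ i, h.eigenvalues i else 0

/-- The largest eigenvalue of a Hermitian complex matrix. -/
noncomputable def lmaxC {V : Type*} [Fintype V] [DecidableEq V] (A : Matrix V V ℂ) : ℝ :=
  if h : A.IsHermitian then ⨆ i, h.eigenvalues i else 0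

/-- Minimum degree of a finite simple graph. -/
noncomputable def minDeg {V : Type*} [Fintype V] (G : SimpleGraph V) : ℕ :=
  @SimpleGraph.minDegree V G _ (Classical.decRel _)

/-- Real adjacency matrix of a finite simple graph. -/
noncomputable def adjMat {V : Type*} [Fintype V] (G : SimpleGraph V) : Matrix V V ℝ :=
  letI : DecidableRel G.Adj := Classical.decRel _
  G.adjMatrix ℝ

/-- `B = D P A Pᵀ D` for a permutation (given by the bijection `σ`) and a
`±1` diagonal matrix `D` (given by `d`). -/
def SwitchEquiv {V W : Type*} (A : Matrix V V ℝ) (B : Matrix W W ℝ) : Prop :=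
  ∃ (σ : W ≃ V) (d : W → ℝ), (∀ i, d i = 1 ∨ d i = -1) ∧
    ∀ u v, B u v = d u * A (σ u) (σ v) * d v

/-- Real adjacency matrix of the line graph of a finite simple graph. -/
noncomputable def lineAdj {V : Type*} [Fintype V] (T : SimpleGraph V) :
    Matrix T.edgeSet T.edgeSet ℝ :=
  letI : Fintype T.edgeSet := (Set.toFinite _).fintype
  adjMat T.lineGraph

/-! ### Auxiliary lemmas -/

section Aux

private lemma st13_sign_list_prod {l : List ℝ} (h : ∀ a ∈ l, a = 1 ∨ a = -1) :
    l.prod = 1 ∨ l.prod = -1 := by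
  induction l with
  | nil => simp
  | cons a l ih =>
    rcases h a (by simp) with ha | ha <;>
      rcases ih (fun b hb => h b (by simp [hb])) with hl | hl <;>
        simp [ha, hl]

private lemma st13_pm_eq_of_mul_eq_one {u v : ℝ} (hu : u = 1 ∨ u = -1) (huv : u * v = 1) :
    u = v := by
  rcases hu with rfl | rfl <;> nlinarith

private lemma st13_pm_sq {u : ℝ} (hu : u = 1 ∨ u = -1) : u * u = 1 := by
  rcases hu with rfl | rfl <;> norm_num

private lemma st13_pm_mul {u v : ℝ} (hu : u = 1 ∨ u = -1) (hv : v = 1 ∨ v = -1) :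
    u * v = 1 ∨ u * v = -1 := by
  rcases hu with rfl | rfl <;> rcases hv with rfl | rfl <;> norm_num

private lemma st13_sym2_rep {α : Type*} (z : Sym2 α) : ∃ a b, z = s(a, b) :=
  Sym2.ind (fun a b => ⟨a, b, rfl⟩) z

private lemma st13_sym2_eq_of_mem {α : Type*} {a b m c : α} (hm : m ∈ s(a, b))
    (hc : c ∈ s(a, b)) (hmc : m ≠ c) : s(a, b) = s(m, c) := by
  rcases Sym2.mem_iff.mp hm with rfl | rfl <;> rcases Sym2.mem_iff.mp hc with rfl | rfl
  · exact absurd rfl hmc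
  · rfl
  · exact Sym2.eq_swap
  · exact absurd rfl hmc

variable {α : Type*}

private lemma st13_connected_of_adj_reachable {G G' : SimpleGraph α}
    (hG : G.Connected) (h : ∀ a b, G.Adj a b → G'.Reachable a b) : G'.Connected := by
  have key : ∀ {a b} (p : G.Walk a b), G'.Reachable a b := by
    intro a b p
    induction p with
    | nil => exact SimpleGraph.Reachable.refl _
    | cons hadj p ih => exact (h _ _ hadj).trans ih
  haveI := hG.nonempty
  exact SimpleGraph.Connected.mk (fun a b => key (hG a b).some)

private lemma st13_exists_tree_le_aux [Fintype α] :
    ∀ (n : ℕ) (G : SimpleGraph α), G.edgeSet.ncard ≤ n → G.Connected →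
      ∃ T ≤ G, T.IsTree := by
  intro n
  induction n with
  | zero =>
    intro G hcard hconn
    refine ⟨G, le_refl _, hconn, ?_⟩
    intro v c hc
    have hempty : G.edgeSet = ∅ := by
      rw [← Set.ncard_eq_zero (Set.toFinite _)]; omega
    cases c with
    | nil => exact hc.ne_nil rfl
    | cons hadj p =>
      have : s(v, _) ∈ G.edgeSet := hadj
      rw [hempty] at this; exact this
  | succ n ih =>
    intro G hcard hconn
    by_cases hac : G.IsAcyclic
    · exact ⟨G, le_refl _, hconn, hac⟩
    · simp only [SimpleGraph.IsAcyclic, not_forall, not_not] at hac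
      obtain ⟨v, c, hc⟩ := hac
      cases c with
      | nil => exact absurd hc (fun h => h.ne_nil rfl)
      | cons hadj p =>
        rename_i b
        have hmem : s(v, b) ∈ (SimpleGraph.Walk.cons hadj p).edges := by
          simp [SimpleGraph.Walk.edges_cons]
        have hkey := SimpleGraph.adj_and_reachable_delete_edges_iff_exists_cycle.mpr
          ⟨v, _, hc, hmem⟩
        set G' : SimpleGraph α := G \ SimpleGraph.fromEdgeSet {s(v, b)} with hG'
        have hle : G' ≤ G := sdiff_le
        have hconn' : G'.Connected := by
          refine st13_connected_of_adj_reachable hconn (fun a c hadj' => ?_)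
          by_cases heq : s(a, c) = s(v, b)
          · rw [Sym2.eq_iff] at heq
            rcases heq with ⟨rfl, rfl⟩ | ⟨rfl, rfl⟩
            · exact hkey.2
            · exact hkey.2.symm
          · refine SimpleGraph.Adj.reachable ?_
            simp only [hG', SimpleGraph.sdiff_adj, SimpleGraph.fromEdgeSet_adj]
            exact ⟨hadj', fun hc => heq hc.1⟩
        have hns : s(v, b) ∉ G'.edgeSet := by
          simp [hG', SimpleGraph.edgeSet_sdiff, hkey.1.ne]
        have hlt : G'.edgeSet.ncard < G.edgeSet.ncard := by
          apply Set.ncard_lt_ncard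
          · exact ⟨SimpleGraph.edgeSet_mono hle, fun hsub => hns (hsub hkey.1)⟩
          · exact Set.toFinite _
        obtain ⟨T, hT, hTree⟩ := ih G' (by omega) hconn'
        exact ⟨T, hT.trans hle, hTree⟩

private lemma st13_exists_tree_le [Fintype α] (G : SimpleGraph α) (hconn : G.Connected) :
    ∃ T ≤ G, T.IsTree := st13_exists_tree_le_aux G.edgeSet.ncard G le_rfl hconn

/-- On a tree, any ±1 edge labelling is balanced. -/
private lemma st13_tree_signs [DecidableEq α] {G : SimpleGraph α} (hT : G.IsTree)
    (σ : α → α → ℝ)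
    (hσ1 : ∀ i j, G.Adj i j → σ i j = 1 ∨ σ i j = -1)
    (hsymm : ∀ i j, G.Adj i j → σ i j = σ j i) :
    ∃ s : α → ℝ, (∀ i, s i = 1 ∨ s i = -1) ∧ ∀ i j, G.Adj i j → s i * s j = σ i j := by
  have hne : Nonempty α := hT.isConnected.nonempty
  obtain ⟨v0⟩ := hne
  have hup := hT.existsUnique_path
  set w : ∀ i : α, G.Walk v0 i := fun i => (hup v0 i).choose with hw
  have hwp : ∀ i, (w i).IsPath := fun i => (hup v0 i).choose_spec.1
  have hwu : ∀ i (p : G.Walk v0 i), p.IsPath → p = w i := fun i p hp =>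
    ((hup v0 i).choose_spec.2 p hp)
  set s : α → ℝ := fun i => ((w i).darts.map fun d => σ d.toProd.1 d.toProd.2).prod with hs
  have hs1 : ∀ i, s i = 1 ∨ s i = -1 := by
    intro i
    apply st13_sign_list_prod
    intro a ha
    simp only [List.mem_map] at ha
    obtain ⟨d, hd, rfl⟩ := ha
    exact hσ1 _ _ (d.adj)
  refine ⟨s, hs1, ?_⟩
  intro i j hadj
  by_cases hmem : j ∈ (w i).support
  · have htake : ((w i).takeUntil j hmem) = w j := hwu _ _ ((hwp i).takeUntil hmem)
    have hdrop : (w i).dropUntil j hmem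
        = SimpleGraph.Walk.cons hadj.symm SimpleGraph.Walk.nil := by
      have h1 : ((w i).dropUntil j hmem).IsPath := (hwp i).dropUntil hmem
      have h2 : (SimpleGraph.Walk.cons hadj.symm SimpleGraph.Walk.nil : G.Walk j i).IsPath := by
        simp [SimpleGraph.Walk.isPath_def, hadj.ne']
      obtain ⟨p, -, hpu⟩ := hT.existsUnique_path j i
      rw [hpu _ h1, hpu _ h2]
    have hspec := (w i).take_spec hmem
    have hdarts : (w i).darts = (w j).darts ++ [⟨(j, i), hadj.symm⟩] := by
      conv_lhs => rw [← hspec]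
      rw [SimpleGraph.Walk.darts_append, htake, hdrop]
      rfl
    have hsi : s i = s j * σ j i := by
      rw [hs]
      simp only [hdarts, List.map_append, List.prod_append, List.map_cons, List.map_nil,
        List.prod_cons, List.prod_nil]
      ring
    rw [hsi, hsymm i j hadj]
    linear_combination (σ j i) * (st13_pm_sq (hs1 j))
  · have hpath : ((w i).concat hadj).IsPath := by
      rw [← SimpleGraph.Walk.isPath_reverse_iff, SimpleGraph.Walk.reverse_concat,
        SimpleGraph.Walk.cons_isPath_iff]
      refine ⟨(SimpleGraph.Walk.isPath_reverse_iff _).mpr (hwp i), ?_⟩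
      rw [SimpleGraph.Walk.support_reverse, List.mem_reverse]
      exact hmem
    have hconc : (w i).concat hadj = w j := hwu _ _ hpath
    have hdarts : (w j).darts = (w i).darts ++ [⟨(i, j), hadj⟩] := by
      rw [← hconc, SimpleGraph.Walk.darts_concat, List.concat_eq_append]
    have hsj : s j = s i * σ i j := by
      rw [hs]
      simp only [hdarts, List.map_append, List.prod_append, List.map_cons, List.map_nil,
        List.prod_cons, List.prod_nil]
      ring
    rw [hsj]
    linear_combination (σ i j) * (st13_pm_sq (hs1 i))

end Aux

section Analytic

private lemma st13_int_entries {z : ℤ} (h : z * z ≤ 2) : z = -1 ∨ z = 0 ∨ z = 1 := by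
  have h1 : -1 ≤ z := by nlinarith
  have h2 : z ≤ 1 := by nlinarith
  omega

variable {V : Type*} [Fintype V] [DecidableEq V] {r : ℕ} {M : Matrix (Fin r) V ℤ}

/-- support of column x -/
private def st13_suppF (M : Matrix (Fin r) V ℤ) (x : V) : Finset (Fin r) :=
  Finset.filter (fun i => M i x ≠ 0) Finset.univ

private lemma st13_mem_suppF {x : V} {i : Fin r} : i ∈ st13_suppF M x ↔ M i x ≠ 0 := by
  simp [st13_suppF]

private lemma st13_entry_pm {x : V} (h2 : ∑ i, M i x * M i x = 2) (i : Fin r) :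
    M i x = -1 ∨ M i x = 0 ∨ M i x = 1 := by
  apply st13_int_entries
  calc M i x * M i x ≤ ∑ j, M j x * M j x :=
        Finset.single_le_sum (fun j _ => mul_self_nonneg (M j x)) (Finset.mem_univ i)
    _ = 2 := h2

private lemma st13_suppF_card {x : V} (h2 : ∑ i, M i x * M i x = 2) :
    (st13_suppF M x).card = 2 := by
  have key : ∀ i, M i x * M i x = if i ∈ st13_suppF M x then 1 else 0 := by
    intro i
    rcases st13_entry_pm h2 i with h | h | h <;> simp [st13_suppF, h]
  have : (2 : ℤ) = ((st13_suppF M x).card : ℤ) := by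
    rw [← h2]
    rw [Finset.sum_congr rfl (fun i _ => key i), Finset.sum_ite_mem,
      Finset.univ_inter, Finset.sum_const]
    simp
  exact_mod_cast this.symm

private lemma st13_sum_mul_supp {x : V} (g : Fin r → ℤ) {a b : Fin r}
    (hab : a ≠ b) (hsupp : st13_suppF M x = {a, b}) :
    ∑ i, M i x * g i = M a x * g a + M b x * g b := by
  rw [← Finset.sum_subset (Finset.subset_univ (st13_suppF M x)) (by
    intro i _ hi
    simp only [st13_suppF, Finset.mem_filter, Finset.mem_univ, true_and, not_not] at hi
    rw [hi, zero_mul])]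
  rw [hsupp, Finset.sum_insert (by simp [hab]), Finset.sum_singleton]

private lemma st13_rayleigh_lower {n : Type*} [Fintype n] [DecidableEq n] [Nonempty n]
    (A : Matrix n n ℝ) (hA : A.IsHermitian) (c : n → ℝ) :
    (⨅ i, hA.eigenvalues i) * (∑ i, c i * c i) ≤ ∑ i, ∑ j, c i * A i j * c j := by
  classical
  set b := hA.eigenvectorBasis with hb
  set c' : EuclideanSpace ℝ n := WithLp.toLp 2 c with hc'
  set d' : EuclideanSpace ℝ n := WithLp.toLp 2 (A *ᵥ c : n → ℝ) with hd'
  have hinner : ∀ (x y : EuclideanSpace ℝ n), (inner ℝ x y : ℝ) = ∑ i, x i * y i := by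
    intro x y
    simp [PiLp.inner_apply, RCLike.inner_apply, mul_comm]
  have hsym : ∀ i, (inner ℝ (b i) d' : ℝ) = hA.eigenvalues i * inner ℝ (b i) c' := by
    intro i
    have hmv : A *ᵥ ⇑(b i) = hA.eigenvalues i • ⇑(b i) := hA.mulVec_eigenvectorBasis i
    have hh : (inner ℝ (b i) d' : ℝ) = ∑ k, (b i) k * ∑ j, A k j * c j := by
      rw [hinner]; rfl
    rw [hh]
    have hAs : ∀ k j, A k j = A j k := fun k j => by
      have := congrFun (congrFun hA j) k
      simpa using this
    have h2 : ∑ k, (b i) k * ∑ j, A k j * c j = ∑ j, (∑ k, A j k * (b i) k) * c j := by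
      simp_rw [Finset.mul_sum]
      rw [Finset.sum_comm]
      apply Finset.sum_congr rfl
      intro j _
      rw [Finset.sum_mul]
      apply Finset.sum_congr rfl
      intro k _
      rw [hAs k j]; ring
    rw [h2]
    have h3 : ∀ j, (∑ k, A j k * (b i) k) = hA.eigenvalues i * (b i) j := by
      intro j
      have := congrFun hmv j
      simpa [Matrix.mulVec, dotProduct] using this
    rw [hinner]
    simp only [h3]
    rw [Finset.mul_sum]
    apply Finset.sum_congr rfl
    intro j _
    ring
  have hexp : (inner ℝ c' d' : ℝ) = ∑ i, (inner ℝ c' (b i) : ℝ) * inner ℝ (b i) d' :=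
    (b.sum_inner_mul_inner c' d').symm
  have hcc : (inner ℝ c' c' : ℝ) = ∑ i, (inner ℝ c' (b i) : ℝ) * inner ℝ (b i) c' :=
    (b.sum_inner_mul_inner c' c').symm
  have hbound : (⨅ i, hA.eigenvalues i) * (inner ℝ c' c' : ℝ) ≤ (inner ℝ c' d' : ℝ) := by
    rw [hexp, hcc, Finset.mul_sum]
    apply Finset.sum_le_sum
    intro i _
    rw [hsym i]
    have hnn : (0:ℝ) ≤ (inner ℝ c' (b i) : ℝ) * inner ℝ (b i) c' := by
      rw [real_inner_comm c' (b i)]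
      exact mul_self_nonneg _
    have hle : (⨅ i, hA.eigenvalues i) ≤ hA.eigenvalues i :=
      ciInf_le (Finite.bddBelow_range _) i
    calc (⨅ i, hA.eigenvalues i) * ((inner ℝ c' (b i) : ℝ) * inner ℝ (b i) c')
        ≤ hA.eigenvalues i * ((inner ℝ c' (b i) : ℝ) * inner ℝ (b i) c') :=
          mul_le_mul_of_nonneg_right hle hnn
      _ = (inner ℝ c' (b i) : ℝ) * (hA.eigenvalues i * inner ℝ (b i) c') := by ring
  have e1 : (inner ℝ c' c' : ℝ) = ∑ i, c i * c i := by rw [hinner]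
  have e2 : (inner ℝ c' d' : ℝ) = ∑ i, ∑ j, c i * A i j * c j := by
    rw [hinner]
    apply Finset.sum_congr rfl
    intro i _
    have : d' i = ∑ j, A i j * c j := rfl
    rw [this, Finset.mul_sum]
    apply Finset.sum_congr rfl
    intro j _
    ring
  rw [← e1, ← e2]
  exact hbound

private lemma st13_key_zero
    (A : Matrix V V ℝ) (hA : A.IsHermitian) (hdiag : ∀ i, A i i = 0)
    (hmin : -2 < ⨅ i, hA.eigenvalues i) (M : Matrix (Fin r) V ℤ)
    (h2 : ∀ x, ∑ i, M i x * M i x = 2)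
    (hoff : ∀ x y, x ≠ y → ((∑ i, M i x * M i y : ℤ) : ℝ) = A x y)
    (c : V → ℝ) (hc : ∀ i : Fin r, (∃ x, M i x ≠ 0) → ∑ x, c x * (M i x : ℝ) = 0) :
    ∀ x, c x = 0 := by
  by_contra hcon
  push_neg at hcon
  obtain ⟨x0, hx0⟩ := hcon
  haveI : Nonempty V := ⟨x0⟩
  set S : ℝ := ∑ i, (∑ x, c x * (M i x : ℝ)) * (∑ x, c x * (M i x : ℝ)) with hS
  have hS0 : S = 0 := by
    apply Finset.sum_eq_zero
    intro i _
    by_cases h : ∃ x, M i x ≠ 0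
    · rw [hc i h, mul_zero]
    · push_neg at h
      have : ∑ x, c x * (M i x : ℝ) = 0 := by
        apply Finset.sum_eq_zero
        intro x _
        rw [h x, Int.cast_zero, mul_zero]
      rw [this, mul_zero]
  have hexp : S = ∑ x, ∑ y, c x * c y * ((∑ i, M i x * M i y : ℤ) : ℝ) := by
    rw [hS]
    simp_rw [Finset.sum_mul_sum]
    rw [Finset.sum_comm]
    apply Finset.sum_congr rfl
    intro x _
    rw [Finset.sum_comm]
    apply Finset.sum_congr rfl
    intro y _
    push_cast
    rw [Finset.mul_sum]
    apply Finset.sum_congr rfl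
    intro i _
    ring
  have hsplit : S = (∑ x, ∑ y, c x * A x y * c y) + 2 * ∑ x, c x * c x := by
    rw [hexp, Finset.mul_sum, ← Finset.sum_add_distrib]
    apply Finset.sum_congr rfl
    intro x _
    have key : ∀ y, c x * c y * ((∑ i, M i x * M i y : ℤ) : ℝ)
        = c x * A x y * c y + if y = x then 2 * (c x * c x) else 0 := by
      intro y
      by_cases hxy : y = x
      · subst hxy
        have : ((∑ i, M i y * M i y : ℤ) : ℝ) = 2 := by rw [h2 y]; norm_num
        rw [this, hdiag y]
        simp; ring
      · rw [hoff x y (fun h => hxy h.symm)]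
        simp [hxy]; ring
    rw [Finset.sum_congr rfl (fun y _ => key y), Finset.sum_add_distrib]
    congr 1
    rw [Finset.sum_ite_eq' Finset.univ x (fun _ => 2 * (c x * c x))]
    simp
  have hray := st13_rayleigh_lower A hA c
  have hpos : 0 < ∑ x, c x * c x := by
    have h1 : c x0 * c x0 ≤ ∑ x, c x * c x :=
      Finset.single_le_sum (fun x _ => mul_self_nonneg (c x)) (Finset.mem_univ x0)
    nlinarith [mul_self_nonneg (c x0), mul_self_pos.mpr hx0]
  nlinarith [hS0, hsplit, hray, hpos, hmin]

end Analytic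

/-- A connected, integrally represented signed graph with
smallest eigenvalue `> -2` is, after removing at most one vertex, switching
equivalent to the line graph of a tree. -/
theorem statement13 (V : Type) [Fintype V] [DecidableEq V]
    (A : Matrix V V ℝ) (hsym : A.IsSymm) (hdiag : ∀ i, A i i = 0)
    (hent : ∀ u v, A u v = 0 ∨ A u v = 1 ∨ A u v = -1)
    (hconn : (SimpleGraph.fromRel fun u v => A u v ≠ 0).Connected)
    (hmin : -2 < lmin A)
    (hrep : ∃ (r : ℕ) (M : Matrix (Fin r) V ℤ),
      (∀ x, ∑ i, M i x * M i x = 2) ∧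
      ∀ x y, x ≠ y → ((∑ i, M i x * M i y : ℤ) : ℝ) = A x y) :
    ∃ (k : ℕ) (T : SimpleGraph (Fin k)), T.IsTree ∧
      ∃ U : Finset V, Uᶜ.card ≤ 1 ∧
        SwitchEquiv (A.submatrix (fun x : U => (x : V)) (fun x : U => (x : V)))
          (lineAdj T) := by
  classical
  obtain ⟨r, M, h2, hoff⟩ := hrep
  haveI : Nonempty V := hconn.nonempty
  have hA : A.IsHermitian := by
    ext i j
    simp only [Matrix.conjTranspose_apply, star_trivial]
    exact congrFun (congrFun hsym i) j
  have hmin' : -2 < ⨅ i, hA.eigenvalues i := by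
    unfold lmin at hmin
    rwa [dif_pos hA] at hmin
  have hAsymm : ∀ x y, A x y = A y x := fun x y =>
    congrFun (congrFun hsym y) x
  -- the set of used coordinates
  set W : Finset (Fin r) := Finset.filter (fun i : Fin r => ∃ x, M i x ≠ 0) Finset.univ with hWdef
  have hWmem : ∀ i : Fin r, i ∈ W ↔ ∃ x, M i x ≠ 0 := by
    intro i; simp [hWdef]
  -- supports
  have hsupp : ∀ x : V, ∃ a b : Fin r, a ≠ b ∧ st13_suppF M x = {a, b} := fun x =>
    Finset.card_eq_two.mp (st13_suppF_card (h2 x))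
  -- cardinality bound  card V ≤ card W
  have hindep : LinearIndependent ℝ (fun x : V => (fun i : ↥W => (M i.1 x : ℝ))) := by
    rw [Fintype.linearIndependent_iff]
    intro c hc
    refine st13_key_zero A hA hdiag hmin' M h2 hoff c (fun i hi => ?_)
    have hiW : i ∈ W := (hWmem i).mpr hi
    have := congrFun hc ⟨i, hiW⟩
    simpa using this
  have hcardV : Fintype.card V ≤ W.card := by
    have h := hindep.fintype_card_le_finrank
    rwa [Module.finrank_pi, Fintype.card_coe] at h
  -- the multigraph shadow on W
  set G0 : SimpleGraph ↥W :=
    { Adj := fun i j => i ≠ j ∧ ∃ x : V, M i.1 x ≠ 0 ∧ M j.1 x ≠ 0,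
      symm := ⟨fun i j h => ⟨h.1.symm, h.2.choose, h.2.choose_spec.2, h.2.choose_spec.1⟩⟩,
      loopless := ⟨fun i h => h.1 rfl⟩ } with hG0def
  have hG0adj : ∀ i j : ↥W, G0.Adj i j ↔ i ≠ j ∧ ∃ x : V, M i.1 x ≠ 0 ∧ M j.1 x ≠ 0 := by
    exact fun i j => Iff.rfl
  haveI : Nonempty ↥W := by
    obtain ⟨a, b, hab, hs⟩ := hsupp (Classical.arbitrary V)
    have ha : M a (Classical.arbitrary V) ≠ 0 := by
      rw [← st13_mem_suppF (M := M), hs]; simp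
    exact ⟨⟨a, (hWmem a).mpr ⟨_, ha⟩⟩⟩
  have hstep : ∀ (x : V) (i j : ↥W), M i.1 x ≠ 0 → M j.1 x ≠ 0 → G0.Reachable i j := by
    intro x i j hi hj
    by_cases hij : i = j
    · subst hij; rfl
    · exact SimpleGraph.Adj.reachable ((hG0adj i j).mpr ⟨hij, x, hi, hj⟩)
  have hAne : ∀ x y : V, A x y ≠ 0 → ∃ m : Fin r, M m x ≠ 0 ∧ M m y ≠ 0 := by
    intro x y h
    have hxy : x ≠ y := fun he => h (he ▸ hdiag x)
    have hcast := hoff x y hxy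
    have hz : (∑ i, M i x * M i y : ℤ) ≠ 0 := by
      intro h0; rw [h0] at hcast; simp at hcast; exact h hcast.symm
    obtain ⟨m, -, hm⟩ := Finset.exists_ne_zero_of_sum_ne_zero hz
    exact ⟨m, fun h0 => hm (by rw [h0, zero_mul]), fun h0 => hm (by rw [h0, mul_zero])⟩
  have hreach : ∀ {x y : V} (p : (SimpleGraph.fromRel fun u v => A u v ≠ 0).Walk x y)
      (i j : ↥W), M i.1 x ≠ 0 → M j.1 y ≠ 0 → G0.Reachable i j := by
    intro x y p
    induction p with
    | nil => exact fun i j hi hj => hstep _ i j hi hj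
    | @cons u v z hadj p ih =>
      intro i j hi hj
      rw [SimpleGraph.fromRel_adj] at hadj
      have hAuv : A u v ≠ 0 := by
        rcases hadj.2 with h | h
        · exact h
        · rw [hAsymm u v]; exact h
      obtain ⟨m, hmu, hmv⟩ := hAne u v hAuv
      have hmW : m ∈ W := (hWmem m).mpr ⟨u, hmu⟩
      exact (hstep u i ⟨m, hmW⟩ hi hmu).trans (ih ⟨m, hmW⟩ j hmv hj)
  have hG0conn : G0.Connected := by
    refine SimpleGraph.Connected.mk (fun i j => ?_)
    obtain ⟨x, hx⟩ := (hWmem i.1).mp i.2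
    obtain ⟨y, hy⟩ := (hWmem j.1).mp j.2
    obtain ⟨p⟩ := hconn x y
    exact hreach p i j hx hy
  -- spanning tree
  obtain ⟨T0, hT0le, hT0tree⟩ := st13_exists_tree_le G0 hG0conn
  haveI : Fintype T0.edgeSet := (Set.toFinite _).fintype
  -- pick a vertex of V for each tree edge
  have hex : ∀ e : T0.edgeSet, ∃ x : V, ∀ i : ↥W, i ∈ e.1 → M i.1 x ≠ 0 := by
    rintro ⟨e, he⟩
    revert he
    refine Sym2.ind (fun i j => ?_) e
    intro he
    rw [SimpleGraph.mem_edgeSet] at he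
    obtain ⟨hne, x, hi, hj⟩ := (hG0adj i j).mp (hT0le he)
    exact ⟨x, fun m hm => by rcases Sym2.mem_iff.mp hm with rfl | rfl <;> assumption⟩
  set pick : T0.edgeSet → V := fun e => (hex e).choose with hpickdef
  have hpick : ∀ (e : T0.edgeSet) (i : ↥W), i ∈ e.1 → M i.1 (pick e) ≠ 0 := fun e =>
    (hex e).choose_spec
  have hsuppPick : ∀ (e : T0.edgeSet) (i j : ↥W), e.1 = s(i, j) →
      st13_suppF M (pick e) = {i.1, j.1} := by
    intro e i j he
    have hne : i ≠ j := by
      have h := e.2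
      rw [he, SimpleGraph.mem_edgeSet] at h
      exact h.ne
    have hne' : i.1 ≠ j.1 := fun h => hne (Subtype.ext h)
    have h1 : i.1 ∈ st13_suppF M (pick e) :=
      st13_mem_suppF.mpr (hpick e i (by rw [he]; simp))
    have h1' : j.1 ∈ st13_suppF M (pick e) :=
      st13_mem_suppF.mpr (hpick e j (by rw [he]; simp))
    have hsub : {i.1, j.1} ⊆ st13_suppF M (pick e) := by
      intro m hm
      rcases Finset.mem_insert.mp hm with rfl | hm
      · exact h1
      · rw [Finset.mem_singleton] at hm; subst hm; exact h1'
    refine (Finset.eq_of_subset_of_card_le hsub ?_).symm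
    rw [st13_suppF_card (h2 _), Finset.card_insert_of_notMem (by simp [hne']),
      Finset.card_singleton]
  have hpickinj : Function.Injective pick := by
    intro e f hef
    obtain ⟨a, b, hab⟩ := st13_sym2_rep e.1
    obtain ⟨a', b', hab'⟩ := st13_sym2_rep f.1
    have hse := hsuppPick e a b hab
    have hsf := hsuppPick f a' b' hab'
    rw [hef, hsf] at hse
    have hnab : a ≠ b := by
      have h := e.2; rw [hab, SimpleGraph.mem_edgeSet] at h; exact h.ne
    have hmema : a.1 ∈ ({a'.1, b'.1} : Finset (Fin r)) := by rw [hse]; simp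
    have hmemb : b.1 ∈ ({a'.1, b'.1} : Finset (Fin r)) := by rw [hse]; simp
    simp only [Finset.mem_insert, Finset.mem_singleton] at hmema hmemb
    apply Subtype.ext
    rw [hab, hab']
    rw [Sym2.eq_iff]
    rcases hmema with h1 | h1 <;> rcases hmemb with h2 | h2
    · exact absurd (Subtype.ext (h1.trans h2.symm)) hnab
    · exact Or.inl ⟨Subtype.ext h1, Subtype.ext h2⟩
    · exact Or.inr ⟨Subtype.ext h1, Subtype.ext h2⟩
    · exact absurd (Subtype.ext (h1.trans h2.symm)) hnab
  -- the vertex subset U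
  set U : Finset V := Finset.image pick Finset.univ with hUdef
  have hUcard : U.card + 1 = W.card := by
    have h1 : U.card = Fintype.card T0.edgeSet := by
      rw [hUdef, Finset.card_image_of_injective _ hpickinj, Finset.card_univ]
    have h2' : T0.edgeFinset.card + 1 = Fintype.card ↥W := hT0tree.card_edgeFinset
    rw [h1, ← Set.toFinset_card]
    rw [SimpleGraph.edgeFinset] at h2'
    rw [h2', Fintype.card_coe]
  have hUc : Uᶜ.card ≤ 1 := by
    rw [Finset.card_compl]
    omega
  -- the abstract tree on Fin k
  set k : ℕ := W.card with hkdef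
  set eqv : ↥W ≃ Fin k := W.equivFin with heqvdef
  set T : SimpleGraph (Fin k) := T0.comap ⇑(eqv.symm.toEmbedding) with hTdef
  set φ : T ≃g T0 := SimpleGraph.Iso.comap eqv.symm T0 with hφdef
  have hφinj : Function.Injective ⇑φ.toHom := φ.toEquiv.injective
  have hTtree : T.IsTree := by
    constructor
    · exact φ.connected_iff.mpr hT0tree.isConnected
    · intro v c hc
      exact hT0tree.2 (c.map φ.toHom) (hc.map hφinj)
  set ψ : T.edgeSet ≃ T0.edgeSet := φ.mapEdgeSet with hψdef
  have hψval : ∀ e : T.edgeSet, ((ψ e : T0.edgeSet) : Sym2 ↥W) = Sym2.map ⇑φ e.1 :=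
    fun e => rfl
  have hψmem : ∀ (e : T.edgeSet) (m : ↥W), m ∈ (ψ e).1 ↔ eqv m ∈ e.1 := by
    intro e m
    rw [hψval, Sym2.mem_map]
    constructor
    · rintro ⟨a, ha, hma⟩
      have hma' : eqv.symm a = m := hma
      have haa : eqv m = a := by rw [← hma']; simp
      rwa [haa]
    · intro h
      refine ⟨eqv m, h, ?_⟩
      show eqv.symm (eqv m) = m
      simp
  -- edge signs
  set σfun : ↥W → ↥W → ℝ := fun i j =>
    if h : T0.Adj i j then
      ((M i.1 (pick ⟨s(i, j), (SimpleGraph.mem_edgeSet _).mpr h⟩) : ℝ) *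
       (M j.1 (pick ⟨s(i, j), (SimpleGraph.mem_edgeSet _).mpr h⟩) : ℝ))
    else 1 with hσdef
  have hMpm : ∀ (i : ↥W) (x : V), M i.1 x ≠ 0 →
      ((M i.1 x : ℝ) = 1 ∨ (M i.1 x : ℝ) = -1) := by
    intro i x hne
    rcases st13_entry_pm (h2 x) i.1 with h | h | h
    · right; rw [h]; norm_num
    · exact absurd h hne
    · left; rw [h]; norm_num
  have hσ1 : ∀ i j, T0.Adj i j → σfun i j = 1 ∨ σfun i j = -1 := by
    intro i j h
    rw [hσdef]
    simp only [dif_pos h]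
    exact st13_pm_mul
      (hMpm i _ (hpick _ i (by simp)))
      (hMpm j _ (hpick _ j (by simp)))
  have hσsymm : ∀ i j, T0.Adj i j → σfun i j = σfun j i := by
    intro i j h
    rw [hσdef]
    simp only [dif_pos h, dif_pos h.symm]
    have hswap : (⟨s(i, j), (SimpleGraph.mem_edgeSet _).mpr h⟩ : T0.edgeSet)
        = ⟨s(j, i), (SimpleGraph.mem_edgeSet _).mpr h.symm⟩ := Subtype.ext Sym2.eq_swap
    rw [hswap]
    ring
  obtain ⟨s, hs1, hsadj⟩ := st13_tree_signs hT0tree σfun hσ1 hσsymm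
  -- consistency of switching values across an edge
  have econsist : ∀ (eh : T0.edgeSet) (i j : ↥W), i ∈ eh.1 → j ∈ eh.1 →
      s i * (M i.1 (pick eh) : ℝ) = s j * (M j.1 (pick eh) : ℝ) := by
    rintro ⟨E, hE⟩ i j hi hj
    obtain ⟨a, b, rfl⟩ := st13_sym2_rep E
    have hadj : T0.Adj a b := (SimpleGraph.mem_edgeSet _).mp hE
    have key : s a * (M a.1 (pick ⟨s(a, b), hE⟩) : ℝ)
        = s b * (M b.1 (pick ⟨s(a, b), hE⟩) : ℝ) := by
      have h1 := hsadj a b hadj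
      rw [hσdef] at h1
      simp only [dif_pos hadj] at h1
      have hpe : (⟨s(a, b), (SimpleGraph.mem_edgeSet _).mpr hadj⟩ : T0.edgeSet)
          = ⟨s(a, b), hE⟩ := rfl
      rw [hpe] at h1
      apply st13_pm_eq_of_mul_eq_one
        (st13_pm_mul (hs1 a) (hMpm a _ (hpick ⟨s(a, b), hE⟩ a (by simp))))
      have hMa := st13_pm_sq (hMpm a _ (hpick (⟨s(a, b), hE⟩ : T0.edgeSet) a (by simp)))
      have hMb := st13_pm_sq (hMpm b _ (hpick (⟨s(a, b), hE⟩ : T0.edgeSet) b (by simp)))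
      calc (s a * (M a.1 (pick ⟨s(a, b), hE⟩) : ℝ))
            * (s b * (M b.1 (pick ⟨s(a, b), hE⟩) : ℝ))
          = (s a * s b) * ((M a.1 (pick ⟨s(a, b), hE⟩) : ℝ)
            * (M b.1 (pick ⟨s(a, b), hE⟩) : ℝ)) := by ring
        _ = ((M a.1 (pick ⟨s(a, b), hE⟩) : ℝ) * (M a.1 (pick ⟨s(a, b), hE⟩) : ℝ))
            * ((M b.1 (pick ⟨s(a, b), hE⟩) : ℝ) * (M b.1 (pick ⟨s(a, b), hE⟩) : ℝ)) := by
            rw [h1]; ring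
        _ = 1 := by rw [hMa, hMb, mul_one]
    rcases Sym2.mem_iff.mp hi with rfl | rfl <;> rcases Sym2.mem_iff.mp hj with rfl | rfl
    · rfl
    · exact key
    · exact key.symm
    · rfl
  -- the diagonal switching signs
  have hend : ∀ e : T.edgeSet, ∃ m : ↥W, m ∈ (ψ e).1 := by
    intro e
    obtain ⟨a, b, hab⟩ := st13_sym2_rep ((ψ e) : Sym2 ↥W)
    exact ⟨a, by rw [hab]; simp⟩
  set endp : T.edgeSet → ↥W := fun e => (hend e).choose with hendpdef
  have hendp : ∀ e : T.edgeSet, endp e ∈ (ψ e).1 := fun e => (hend e).choose_spec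
  set d : T.edgeSet → ℝ := fun e => s (endp e) * (M (endp e).1 (pick (ψ e)) : ℝ) with hddef
  have hd1 : ∀ e, d e = 1 ∨ d e = -1 := fun e =>
    st13_pm_mul (hs1 _) (hMpm _ _ (hpick (ψ e) _ (hendp e)))
  have hdspec : ∀ (e : T.edgeSet) (i : ↥W), i ∈ (ψ e).1 →
      d e = s i * (M i.1 (pick (ψ e)) : ℝ) := fun e i hi =>
    econsist (ψ e) (endp e) i (hendp e) hi
  -- the bijection onto U
  have hmemU : ∀ e : T0.edgeSet, pick e ∈ U := by
    intro e; rw [hUdef]; exact Finset.mem_image.mpr ⟨e, Finset.mem_univ e, rfl⟩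
  set pick' : T0.edgeSet → ↥U := fun e => ⟨pick e, hmemU e⟩ with hpick'def
  have hbij : Function.Bijective pick' := by
    constructor
    · intro e f hef
      exact hpickinj (congrArg Subtype.val hef)
    · rintro ⟨u, hu⟩
      rw [hUdef] at hu
      obtain ⟨e, -, he⟩ := Finset.mem_image.mp hu
      exact ⟨e, Subtype.ext he⟩
  refine ⟨k, T, hTtree, U, hUc, ψ.trans (Equiv.ofBijective pick' hbij), d, hd1, ?_⟩
  intro u v
  -- unfold entries
  have hσval : ∀ e : T.edgeSet,
      (((ψ.trans (Equiv.ofBijective pick' hbij)) e : ↥U) : V) = pick (ψ e) := fun e => rfl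
  have hLHS : lineAdj T u v = if (T.lineGraph).Adj u v then 1 else 0 := by
    simp [lineAdj, adjMat, SimpleGraph.adjMatrix_apply]
  rw [hLHS, Matrix.submatrix_apply, hσval, hσval]
  by_cases huv : u = v
  · subst huv
    rw [if_neg (T.lineGraph.irrefl), hdiag, mul_zero, zero_mul]
  · -- distinct edges
    have hψne : ψ u ≠ ψ v := fun h => huv (ψ.injective h)
    set x : V := pick (ψ u) with hxdef
    set y : V := pick (ψ v) with hydef
    have hxy : x ≠ y := fun h => hψne (hpickinj h)
    obtain ⟨a, b, hab⟩ := st13_sym2_rep ((ψ u) : Sym2 ↥W)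
    obtain ⟨a', b', hab'⟩ := st13_sym2_rep ((ψ v) : Sym2 ↥W)
    have hnab : a ≠ b := by
      have h := (ψ u).2; rw [hab, SimpleGraph.mem_edgeSet] at h; exact h.ne
    have hnab' : a' ≠ b' := by
      have h := (ψ v).2; rw [hab', SimpleGraph.mem_edgeSet] at h; exact h.ne
    have hnab1 : a.1 ≠ b.1 := fun h => hnab (Subtype.ext h)
    have hsx : st13_suppF M x = {a.1, b.1} := hsuppPick (ψ u) a b hab
    have hsy : st13_suppF M y = {a'.1, b'.1} := hsuppPick (ψ v) a' b' hab'
    have hAxy : A x y = ((∑ i, M i x * M i y : ℤ) : ℝ) := (hoff x y hxy).symm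
    have hsum : (∑ i, M i x * M i y) = M a.1 x * M a.1 y + M b.1 x * M b.1 y :=
      st13_sum_mul_supp (fun i => M i y) hnab1 hsx
    -- membership transfer between the two levels
    have hshare_iff : (∃ m : ↥W, m ∈ (ψ u).1 ∧ m ∈ (ψ v).1)
        ↔ ∃ n : Fin k, n ∈ u.1 ∧ n ∈ v.1 := by
      constructor
      · rintro ⟨m, h1, h2⟩
        exact ⟨eqv m, (hψmem u m).mp h1, (hψmem v m).mp h2⟩
      · rintro ⟨n, h1, h2⟩
        refine ⟨eqv.symm n, ?_, ?_⟩
        · rw [hψmem u]; simpa using h1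
        · rw [hψmem v]; simpa using h2
    -- a vertex of W that lies on one edge but equals neither endpoint of the other
    have hnotin : ∀ (c : ↥W), c ∈ (ψ u).1 → c ∉ (ψ v).1 → M c.1 y = 0 := by
      intro c hcu hcv
      by_contra h0
      have : c.1 ∈ st13_suppF M y := st13_mem_suppF.mpr h0
      rw [hsy] at this
      simp only [Finset.mem_insert, Finset.mem_singleton] at this
      apply hcv
      rw [hab']
      rcases this with h | h
      · rw [show c = a' from Subtype.ext h]; simp
      · rw [show c = b' from Subtype.ext h]; simp
    by_cases hshare : ∃ m : ↥W, m ∈ (ψ u).1 ∧ m ∈ (ψ v).1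
    · obtain ⟨m, hmu, hmv⟩ := hshare
      -- uniqueness of the shared endpoint
      have huniq : ∀ c : ↥W, c ∈ (ψ u).1 → c ≠ m → c ∉ (ψ v).1 := by
        intro c hcu hcm hcv
        apply hψne
        apply Subtype.ext
        have h1 : ((ψ u) : Sym2 ↥W) = s(m, c) := by
          rw [hab]; exact st13_sym2_eq_of_mem (hab ▸ hmu) (hab ▸ hcu) (fun h => hcm h.symm)
        have h2 : ((ψ v) : Sym2 ↥W) = s(m, c) := by
          rw [hab']; exact st13_sym2_eq_of_mem (hab' ▸ hmv) (hab' ▸ hcv) (fun h => hcm h.symm)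
        rw [h1, h2]
      have hadjL : (T.lineGraph).Adj u v := by
        rw [SimpleGraph.lineGraph_adj_iff_exists]
        obtain ⟨n, hn1, hn2⟩ := hshare_iff.mp ⟨m, hmu, hmv⟩
        exact ⟨huv, n, hn1, hn2⟩
      rw [if_pos hadjL]
      -- compute the sum
      have hAval : ((∑ i, M i x * M i y : ℤ) : ℝ) = (M m.1 x : ℝ) * (M m.1 y : ℝ) := by
        have hma : m = a ∨ m = b := by
          have := hab ▸ hmu; exact Sym2.mem_iff.mp this
        rcases hma with rfl | rfl
        · have hb0 : M b.1 y = 0 := hnotin b (by rw [hab]; simp) (huniq b (by rw [hab]; simp) (Ne.symm hnab))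
          rw [hsum, hb0, mul_zero, add_zero]; push_cast; ring
        · have ha0 : M a.1 y = 0 := hnotin a (by rw [hab]; simp) (huniq a (by rw [hab]; simp) hnab)
          rw [hsum, ha0, mul_zero, zero_add]; push_cast; ring
      rw [hAxy, hAval, hdspec u m hmu, hdspec v m hmv]
      have e1 := st13_pm_sq (hs1 m)
      have e2 := st13_pm_sq (hMpm m x (hpick (ψ u) m hmu))
      have e3 := st13_pm_sq (hMpm m y (hpick (ψ v) m hmv))
      calc (1:ℝ) = (s m * s m) * (((M m.1 x : ℝ) * (M m.1 x : ℝ))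
            * ((M m.1 y : ℝ) * (M m.1 y : ℝ))) := by rw [e1, e2, e3]; norm_num
        _ = s m * (M m.1 x : ℝ) * ((M m.1 x : ℝ) * (M m.1 y : ℝ))
            * (s m * (M m.1 y : ℝ)) := by ring
    · -- no shared endpoint
      have hadjL : ¬(T.lineGraph).Adj u v := by
        rw [SimpleGraph.lineGraph_adj_iff_exists]
        rintro ⟨-, n, hn1, hn2⟩
        exact hshare (hshare_iff.mpr ⟨n, hn1, hn2⟩)
      rw [if_neg hadjL]
      push_neg at hshare
      have ha0 : M a.1 y = 0 := hnotin a (by rw [hab]; simp) (hshare a (by rw [hab]; simp))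
      have hb0 : M b.1 y = 0 := hnotin b (by rw [hab]; simp) (hshare b (by rw [hab]; simp))
      rw [hAxy, hsum]
      rw [ha0, hb0]
      push_cast
      ring
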